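/- arXiv:2106.10585 — 2 statements merged into one kernel-verified Lean document; each statement's English description precedes it below -/
import Mathlib

section
/- The map ω(z₁, z₂) = (√(2z₁), √(z₂)), where √ denotes the principal branch of the complex square root, maps the Siegel half space ℍ² = {(z₁, z₂) ∈ ℂ² : Re z₁ > |z₂|²} into itself: if Re z₁ > |z₂|², then Re √(2z₁) > |√(z₂)|². -/
open Complex

theorem Complex.norm_cpow_inv_two_sq (z : ℂ) : ‖z ^ (2⁻¹ : ℂ)‖ ^ 2 = ‖z‖ := by
  rw [← ofReal_ofNat, ← ofReal_inv, norm_cpow_real, ← Real.rpow_natCast,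
    ← Real.rpow_mul (norm_nonneg z)]
  norm_num

theorem Complex.sqrt_re_le_re_cpow_inv_two (z : ℂ) : √z.re ≤ (z ^ (2⁻¹ : ℂ)).re := by
  rw [cpow_inv_two_re]
  exact Real.sqrt_le_sqrt (by linarith [re_le_norm z])

/-- the map `ω(z₁, z₂) = (√(2z₁), √z₂)` (principal square roots) maps
the Siegel half space into itself: if `Re z₁ > |z₂|²` then `Re √(2z₁) > |√z₂|²`. -/
theorem omega_maps_siegel_to_siegel (z₁ z₂ : ℂ)
    (h : ‖z₂‖ ^ 2 < z₁.re) :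
    ‖z₂ ^ ((1 : ℂ) / 2)‖ ^ 2 < ((2 * z₁) ^ ((1 : ℂ) / 2)).re := by
  have hre : ‖z₂‖ ^ 2 < (2 * z₁).re := by
    simp only [mul_re, re_ofNat, im_ofNat, zero_mul, sub_zero]
    linarith [sq_nonneg ‖z₂‖]
  rw [one_div, norm_cpow_inv_two_sq]
  calc ‖z₂‖ = √(‖z₂‖ ^ 2) := (Real.sqrt_sq (norm_nonneg z₂)).symm
    _ < √(2 * z₁).re := Real.sqrt_lt_sqrt (sq_nonneg _) hre
    _ ≤ ((2 * z₁) ^ (2⁻¹ : ℂ)).re := sqrt_re_le_re_cpow_inv_two _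
end

section
/- The linear fractional map φ(z₁, z₂) = ((z₁ + 2z₂ + 1)/(−z₁ + 2z₂ + 3), (−2z₁ + 2z₂ + 2)/(−z₁ + 2z₂ + 3)) maps the open unit ball 𝔹₂ = {(z₁, z₂) ∈ ℂ² : |z₁|² + |z₂|² < 1} into itself: for every (z₁, z₂) ∈ 𝔹₂, the denominator −z₁ + 2z₂ + 3 is nonzero and φ(z₁, z₂) ∈ 𝔹₂. Moreover φ(1, 0) = (1, 0), i.e. (1, 0) is a fixed point of φ on the boundary. -/
/-!
With `J = diag(1, 1, -1)`, the coefficient matrix `M = [[1, 2, 1], [-2, 2, 2], [-1, 2, 3]]` of `φ`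
satisfies `Mᴴ J M = 4 J`, so `φ` is an automorphism of the ball. Evaluated at `(z₁, z₂, 1)` this
identity says that the squared norm of the denominator exceeds the sum of the squared norms of
the numerators by `4 (1 - |z₁|² - |z₂|²)`, which is positive inside the ball.
-/

theorem ne_zero_and_norm_div_sq_add_lt_one {𝕜 : Type*} [NormedField 𝕜] {a b d : 𝕜} {r : ℝ}
    (hr : 0 < r) (h : ‖a‖ ^ 2 + ‖b‖ ^ 2 + r = ‖d‖ ^ 2) :
    d ≠ 0 ∧ ‖a / d‖ ^ 2 + ‖b / d‖ ^ 2 < 1 := by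
  have hd : 0 < ‖d‖ ^ 2 := h ▸ by positivity
  refine ⟨fun hd0 => by simp [hd0] at hd, ?_⟩
  rw [norm_div, norm_div, div_pow, div_pow, ← add_div, div_lt_one hd]
  linarith

theorem lfm_example_norm_sq_identity (z₁ z₂ : ℂ) :
    ‖z₁ + 2 * z₂ + 1‖ ^ 2 + ‖-2 * z₁ + 2 * z₂ + 2‖ ^ 2 + 4 * (1 - ‖z₁‖ ^ 2 - ‖z₂‖ ^ 2) =
      ‖-z₁ + 2 * z₂ + 3‖ ^ 2 := by
  simp only [Complex.sq_norm, Complex.normSq_apply, Complex.add_re, Complex.add_im,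
    Complex.mul_re, Complex.mul_im, Complex.neg_re, Complex.neg_im]
  norm_num
  ring

/-- the linear fractional map
`φ(z₁, z₂) = ((z₁+2z₂+1)/(-z₁+2z₂+3), (-2z₁+2z₂+2)/(-z₁+2z₂+3))` maps the open unit
ball `𝔹₂` into itself (the denominator being nonzero on `𝔹₂`), and fixes the boundary
point `(1, 0)`. -/
theorem lfm_example_maps_ball_to_ball :
    (∀ z₁ z₂ : ℂ, ‖z₁‖ ^ 2 + ‖z₂‖ ^ 2 < 1 →
      (-z₁ + 2 * z₂ + 3 ≠ 0 ∧
        ‖(z₁ + 2 * z₂ + 1) / (-z₁ + 2 * z₂ + 3)‖ ^ 2 +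
          ‖(-2 * z₁ + 2 * z₂ + 2) / (-z₁ + 2 * z₂ + 3)‖ ^ 2 < 1)) ∧
    ((((1 : ℂ) + 2 * 0 + 1) / (-(1 : ℂ) + 2 * 0 + 3),
      ((-2 : ℂ) * 1 + 2 * 0 + 2) / (-(1 : ℂ) + 2 * 0 + 3)) = ((1 : ℂ), (0 : ℂ))) := by
  refine ⟨fun z₁ z₂ hz => ?_, by norm_num⟩
  have hr : 0 < 4 * (1 - ‖z₁‖ ^ 2 - ‖z₂‖ ^ 2) := by linarith
  exact ne_zero_and_norm_div_sq_add_lt_one hr (lfm_example_norm_sq_identity z₁ z₂)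
end
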